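/- Let R ⊆ ℚ^k be a nonempty semilinear set. Suppose that for every rational δ with 0 < δ < 1 there exists a semilinear set U_δ ⊆ ℚ with 1 ∈ U_δ and U_δ ⊆ (1−δ, 1+δ) such that, for all a, b ∈ ℚ^k, the unary set T = {y ∈ ℚ | there exists t ∈ U_δ with y•a + (t−y)•b ∈ R} does not exclude an interval. Then R is dense in its convex hull: for every p in the convex hull of R and every rational ε > 0, there exists x ∈ R with Σᵢ (pᵢ − xᵢ)² < ε². -/

import Mathlib

/-!
Everything happens in the closure of `R` for the product topology on `ℚ^k`. Given `a, b ∈ R`,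
taking `t = 1` shows that `T = {y | ∃ t ∈ U_δ, y • a + (t - y) • b ∈ R}` contains `0` and `1`,
so, as `T` excludes no interval, it is dense in `(0, 1)`. A point `y • a + (t - y) • b` of `R`
with `y` close to `w` and `t ∈ U_δ` close to `1` is close to `w • a + (1 - w) • b`, so the
closure of `R` contains every open segment between points of `R`. By continuity of the affine
operations the closure is then convex, hence contains the convex hull of `R`.
-/

/-- A linear set in ℚ^n: the solution set of a finite conjunction of linear
inequalities `c₁x₁+…+cₙxₙ ≤ b` or `c₁x₁+…+cₙxₙ < b` with rational coefficients. -/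
def IsLinearSet' (n : ℕ) (S : Set (Fin n → ℚ)) : Prop :=
  ∃ (m : ℕ) (c : Fin m → Fin n → ℚ) (b : Fin m → ℚ) (strict : Fin m → Bool),
    S = {x | ∀ i, if strict i then (∑ j, c i j * x j) < b i else (∑ j, c i j * x j) ≤ b i}

/-- A semilinear set: a finite union of linear sets. -/
def IsSemilinear (n : ℕ) (S : Set (Fin n → ℚ)) : Prop :=
  ∃ (k : ℕ) (f : Fin k → Set (Fin n → ℚ)), (∀ i, IsLinearSet' n (f i)) ∧ S = ⋃ i, f i

/-- A unary semilinear relation: a semilinear subset of ℚ. -/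
def IsSemilinear1 (U : Set ℚ) : Prop :=
  IsSemilinear 1 {v : Fin 1 → ℚ | v 0 ∈ U}

/-- A set S ⊆ ℚ excludes an interval if there are p, q ∈ S and rationals
0 < δ₁ < δ₂ < 1 such that p + (q−p)y ∉ S whenever δ₁ ≤ y ≤ δ₂. -/
def ExcludesInterval (S : Set ℚ) : Prop :=
  ∃ p ∈ S, ∃ q ∈ S, ∃ d1 d2 : ℚ, 0 < d1 ∧ d1 < d2 ∧ d2 < 1 ∧
    ∀ y : ℚ, d1 ≤ y → y ≤ d2 → p + (q - p) * y ∉ S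

/-- The convex hull of S ⊆ ℚ^n: all convex combinations of points of S with
rational coefficients. -/
def convHull' {n : ℕ} (S : Set (Fin n → ℚ)) : Set (Fin n → ℚ) :=
  {x | ∃ (k : ℕ) (w : Fin k → ℚ) (p : Fin k → (Fin n → ℚ)),
    (∀ i, 0 ≤ w i) ∧ (∀ i, p i ∈ S) ∧ (∑ i, w i) = 1 ∧ x = ∑ i, w i • p i}

open Set Filter Topology

section ClosureConvex

variable {𝕜 E : Type*} [Semiring 𝕜] [PartialOrder 𝕜] [ZeroLEOneClass 𝕜]
  [AddCommMonoid E] [Module 𝕜 E] [TopologicalSpace E] [ContinuousAdd E] [ContinuousConstSMul 𝕜 E]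

theorem convex_closure_of_forall_openSegment_subset {s : Set E}
    (h : ∀ a ∈ s, ∀ b ∈ s, openSegment 𝕜 a b ⊆ closure s) : Convex 𝕜 (closure s) := by
  refine convex_iff_openSegment_subset.mpr fun x hx y hy => ?_
  rintro _ ⟨α, β, hα, hβ, hαβ, rfl⟩
  rw [← closure_closure (s := s)]
  exact map_mem_closure₂ (f := fun u v => α • u + β • v) (by fun_prop) hx hy
    fun u hu v hv => h u hu v hv ⟨α, β, hα, hβ, hαβ, rfl⟩

end ClosureConvex

theorem convHull'_subset {n : ℕ} {S C : Set (Fin n → ℚ)} (hC : Convex ℚ C) (hSC : S ⊆ C) :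
    convHull' S ⊆ C := by
  rintro _ ⟨m, w, p, hw, hp, hsum, rfl⟩
  exact hC.sum_mem (fun i _ => hw i) hsum fun i _ => hSC (hp i)

theorem Ioo_subset_closure_of_not_excludesInterval {T : Set ℚ} (hT : ¬ ExcludesInterval T)
    (h0 : 0 ∈ T) (h1 : 1 ∈ T) : Ioo 0 1 ⊆ closure T := by
  rintro w ⟨hw0, hw1⟩
  refine mem_closure_iff_nhds.mpr fun V hV => ?_
  obtain ⟨l, u, ⟨hl, hu⟩, hlu⟩ := mem_nhds_iff_exists_Ioo_subset.mp hV
  by_contra hVT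
  refine hT ⟨0, h0, 1, h1, max ((l + w) / 2) (w / 2), min ((w + u) / 2) ((1 + w) / 2),
    by positivity, max_lt (lt_min (by linarith) (by linarith)) (lt_min (by linarith) (by linarith)),
    min_lt_of_right_lt (by linarith),
    fun y hy1 hy2 hyT => hVT ⟨y, ?_, by simpa using hyT⟩⟩
  simp only [max_le_iff, le_min_iff] at hy1 hy2
  exact hlu ⟨by linarith, by linarith⟩

theorem openSegment_subset_closure_of_forall_not_excludesInterval {E : Type*} [AddCommGroup E]
    [Module ℚ E] [TopologicalSpace E] [ContinuousAdd E] [ContinuousSMul ℚ E] {R : Set E}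
    (h : ∀ δ : ℚ, 0 < δ → δ < 1 → ∃ U : Set ℚ, (1 : ℚ) ∈ U ∧ U ⊆ Ioo (1 - δ) (1 + δ) ∧
      ∀ a b : E, ¬ ExcludesInterval {y : ℚ | ∃ t ∈ U, y • a + (t - y) • b ∈ R})
    {a b : E} (ha : a ∈ R) (hb : b ∈ R) : openSegment ℚ a b ⊆ closure R := by
  rintro _ ⟨α, β, hα, hβ, hαβ, rfl⟩
  obtain rfl : β = 1 - α := by linarith
  let f : ℚ × ℚ → E := fun p => p.1 • a + (p.2 - p.1) • b
  refine mem_closure_iff_nhds.mpr fun V hV => ?_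
  have hfV : f ⁻¹' V ∈ 𝓝 (α, 1) :=
    (by fun_prop : Continuous f).continuousAt.preimage_mem_nhds (by simpa [f] using hV)
  rw [nhds_prod_eq] at hfV
  obtain ⟨Wy, hWy, Wt, hWt, hWV⟩ := mem_prod_iff.mp hfV
  obtain ⟨l, u, ⟨hl, hu⟩, hlu⟩ := mem_nhds_iff_exists_Ioo_subset.mp hWt
  obtain ⟨U, hU1, hUδ, hU⟩ := h (min (min (1 - l) (u - 1)) (1 / 2))
    (lt_min (lt_min (by linarith) (by linarith)) (by norm_num))
    (min_lt_of_right_lt (by norm_num))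
  have hUWt : U ⊆ Wt := fun t ht => by
    obtain ⟨ht₁, ht₂⟩ := hUδ ht
    have := min_le_left (min (1 - l) (u - 1)) (1 / 2)
    exact hlu ⟨by linarith [min_le_left (1 - l) (u - 1)],
      by linarith [min_le_right (1 - l) (u - 1)]⟩
  set T : Set ℚ := {y | ∃ t ∈ U, y • a + (t - y) • b ∈ R}
  have hαT : α ∈ closure T :=
    Ioo_subset_closure_of_not_excludesInterval (hU a b) ⟨1, hU1, by simpa using hb⟩
      ⟨1, hU1, by simpa using ha⟩ ⟨hα, by linarith⟩
  obtain ⟨y, hyWy, t, htU, hyt⟩ := mem_closure_iff_nhds.mp hαT Wy hWy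
  exact ⟨f (y, t), hWV ⟨hyWy, hUWt htU⟩, hyt⟩

theorem exists_sum_sq_sub_lt_of_mem_closure {ι : Type*} [Fintype ι] {s : Set (ι → ℚ)}
    {p : ι → ℚ} (hp : p ∈ closure s) {ε : ℚ} (hε : 0 < ε) :
    ∃ x ∈ s, ∑ i, (p i - x i) ^ 2 < ε ^ 2 := by
  set r : ℚ := ε / (Fintype.card ι + 1)
  have hr : 0 < r := by positivity
  obtain ⟨x, hxV, hxs⟩ := mem_closure_iff_nhds.mp hp (univ.pi fun i => Ioo (p i - r) (p i + r))
    (set_pi_mem_nhds finite_univ fun i _ => Ioo_mem_nhds (by linarith) (by linarith))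
  refine ⟨x, hxs, ?_⟩
  have hx : ∀ i, (p i - x i) ^ 2 ≤ r ^ 2 := fun i => by
    obtain ⟨h1, h2⟩ := hxV i (mem_univ i)
    exact sq_le_sq' (by linarith) (by linarith)
  have hcard : (0 : ℚ) ≤ Fintype.card ι := Nat.cast_nonneg _
  calc ∑ i, (p i - x i) ^ 2 ≤ Fintype.card ι * r ^ 2 := by
        simpa using Finset.sum_le_sum fun i (_ : i ∈ Finset.univ) => hx i
    _ < ε ^ 2 := by
        rw [div_pow, ← mul_div_assoc, div_lt_iff₀ (by positivity)]
        nlinarith [pow_pos hε 2, mul_nonneg (sq_nonneg ε) hcard,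
          mul_nonneg (sq_nonneg ε) (sq_nonneg (Fintype.card ι : ℚ))]

theorem stmt7_general {k : ℕ} (R : Set (Fin k → ℚ))
    (h : ∀ δ : ℚ, 0 < δ → δ < 1 → ∃ U : Set ℚ, IsSemilinear1 U ∧ (1 : ℚ) ∈ U ∧
      U ⊆ Set.Ioo (1 - δ) (1 + δ) ∧
      ∀ a b : Fin k → ℚ,
        ¬ ExcludesInterval {y : ℚ | ∃ t ∈ U, y • a + (t - y) • b ∈ R}) :
    ∀ p ∈ convHull' R, ∀ ε : ℚ, 0 < ε → ∃ x ∈ R, (∑ i, (p i - x i) ^ 2) < ε ^ 2 := by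
  have hsegment : ∀ a ∈ R, ∀ b ∈ R, openSegment ℚ a b ⊆ closure R := fun a ha b hb =>
    openSegment_subset_closure_of_forall_not_excludesInterval
      (fun δ hδ0 hδ1 => let ⟨U, _, hU⟩ := h δ hδ0 hδ1; ⟨U, hU⟩) ha hb
  have hconv : Convex ℚ (closure R) := convex_closure_of_forall_openSegment_subset hsegment
  intro p hp ε hε
  exact exists_sum_sq_sub_lt_of_mem_closure (convHull'_subset hconv subset_closure hp) hε

/-- Let R ⊆ ℚ^k be a nonempty semilinear set.  Suppose that for every rational
δ ∈ (0,1) there is a semilinear U_δ ⊆ ℚ with 1 ∈ U_δ ⊆ (1−δ, 1+δ) such that for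
all a, b ∈ ℚ^k, the set T = {y | ∃ t ∈ U_δ, y•a + (t−y)•b ∈ R} does not exclude
an interval.  Then R is dense in its convex hull. -/
theorem stmt7 {k : ℕ} (R : Set (Fin k → ℚ)) (hR : IsSemilinear k R) (hne : R.Nonempty)
    (h : ∀ δ : ℚ, 0 < δ → δ < 1 → ∃ U : Set ℚ, IsSemilinear1 U ∧ (1 : ℚ) ∈ U ∧
      U ⊆ Set.Ioo (1 - δ) (1 + δ) ∧
      ∀ a b : Fin k → ℚ,
        ¬ ExcludesInterval {y : ℚ | ∃ t ∈ U, y • a + (t - y) • b ∈ R}) :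
    ∀ p ∈ convHull' R, ∀ ε : ℚ, 0 < ε → ∃ x ∈ R, (∑ i, (p i - x i) ^ 2) < ε ^ 2 :=
  stmt7_general R h
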